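/- arXiv:1906.05098 — 3 statements merged into one kernel-verified Lean document; each statement's English description precedes it below -/
import Mathlib

section
/- Let α, β, γ be real numbers with β ≠ 0 and set δ := α − γ. Then E[max(α + β·Z, γ)] − max(α, γ) = |β|·φ(|δ|/|β|) − |δ|·Φ(−|δ|/|β|), where Z is a standard normal random variable. -/
/-!
Write `δ = α - γ`. Since `max (α + β z) γ = γ + (β z + δ)⁺`, everything reduces to the
stop-loss transform `E[(β Z + δ)⁺]`. By the symmetry of `φ` one may take `β > 0`; the integrand
is then supported on `z > -δ/β`, where `z φ(z) = -φ'(z)` and `∫_{z > t} φ = Φ(-t)` give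
`E[(β Z + δ)⁺] = β φ(δ/β) + δ Φ(δ/β)`. Subtracting `δ⁺` and using `Φ(t) + Φ(-t) = 1` when
`δ ≥ 0` yields the symmetric form in `|δ|`.
-/

/-- The standard normal density `φ(u) = (2π)^(−1/2) · exp(−u²/2)`. -/
noncomputable def stdNormalPDF (u : ℝ) : ℝ :=
  (Real.sqrt (2 * Real.pi))⁻¹ * Real.exp (-u ^ 2 / 2)

/-- The standard normal distribution function `Φ(u) = ∫_{−∞}^{u} φ(t) dt`. -/
noncomputable def stdNormalCDF (u : ℝ) : ℝ :=
  ∫ t in Set.Iic u, stdNormalPDF t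

open MeasureTheory Real Set Filter ProbabilityTheory Topology

lemma stdNormalPDF_eq_gaussianPDFReal : stdNormalPDF = gaussianPDFReal 0 1 := by
  ext u
  simp [stdNormalPDF, gaussianPDFReal]

lemma stdNormalPDF_neg (u : ℝ) : stdNormalPDF (-u) = stdNormalPDF u := by
  simp [stdNormalPDF]

lemma stdNormalPDF_nonneg (u : ℝ) : 0 ≤ stdNormalPDF u := by
  rw [stdNormalPDF]
  positivity

lemma integrable_stdNormalPDF : Integrable stdNormalPDF := by
  rw [stdNormalPDF_eq_gaussianPDFReal]
  exact integrable_gaussianPDFReal 0 1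

lemma integral_stdNormalPDF : ∫ u, stdNormalPDF u = 1 := by
  rw [stdNormalPDF_eq_gaussianPDFReal]
  exact integral_gaussianPDFReal_eq_one 0 one_ne_zero

lemma integrable_mul_stdNormalPDF : Integrable fun u => u * stdNormalPDF u := by
  have h := (integrable_mul_exp_neg_mul_sq (b := 1 / 2) (by norm_num)).const_mul
    (√(2 * π))⁻¹
  refine h.congr (ae_of_all _ fun u => ?_)
  simp only [stdNormalPDF]
  ring_nf

lemma hasDerivAt_stdNormalPDF (u : ℝ) :
    HasDerivAt stdNormalPDF (-u * stdNormalPDF u) u := by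
  have h : HasDerivAt (fun v => -v ^ 2 / 2) (-u) u :=
    ((hasDerivAt_pow 2 u).fun_neg.div_const 2).congr_deriv (by ring)
  exact (h.exp.const_mul _).congr_deriv (by rw [stdNormalPDF]; ring)

lemma tendsto_stdNormalPDF_atTop : Tendsto stdNormalPDF atTop (𝓝 0) := by
  have h : Tendsto (fun u : ℝ => -u ^ 2 / 2) atTop atBot := by
    simp_rw [neg_div]
    exact tendsto_neg_atTop_atBot.comp ((tendsto_pow_atTop two_ne_zero).atTop_div_const two_pos)
  have := (tendsto_exp_atBot.comp h).const_mul (√(2 * π))⁻¹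
  rwa [mul_zero] at this

lemma integral_Ioi_mul_stdNormalPDF (t : ℝ) :
    ∫ u in Ioi t, u * stdNormalPDF u = stdNormalPDF t := by
  have h := integral_Ioi_of_hasDerivAt_of_tendsto' (f := fun u => -stdNormalPDF u) (a := t)
    (fun u _ => (hasDerivAt_stdNormalPDF u).fun_neg)
    (by simpa using integrable_mul_stdNormalPDF.integrableOn)
    (by simpa using tendsto_stdNormalPDF_atTop.neg)
  simpa using h

lemma integral_Ioi_stdNormalPDF (t : ℝ) :
    ∫ u in Ioi t, stdNormalPDF u = stdNormalCDF (-t) := by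
  simp_rw [stdNormalCDF, ← integral_comp_neg_Ioi, stdNormalPDF_neg]

lemma stdNormalCDF_add_stdNormalCDF_neg (t : ℝ) : stdNormalCDF t + stdNormalCDF (-t) = 1 := by
  rw [← integral_Ioi_stdNormalPDF, stdNormalCDF,
    intervalIntegral.integral_Iic_add_Ioi integrable_stdNormalPDF.integrableOn
      integrable_stdNormalPDF.integrableOn, integral_stdNormalPDF]

lemma integrable_affine_mul_stdNormalPDF (β δ : ℝ) :
    Integrable fun z => (β * z + δ) * stdNormalPDF z := by
  simp_rw [add_mul, mul_assoc]
  exact (integrable_mul_stdNormalPDF.const_mul β).add (integrable_stdNormalPDF.const_mul δ)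

lemma integrable_max_mul_stdNormalPDF (β δ : ℝ) :
    Integrable fun z => max (β * z + δ) 0 * stdNormalPDF z := by
  refine (integrable_affine_mul_stdNormalPDF β δ).pos_part.congr (ae_of_all _ fun z => ?_)
  simp [max_mul_of_nonneg _ _ (stdNormalPDF_nonneg z)]

lemma max_mul_stdNormalPDF_eq_indicator {b : ℝ} (hb : 0 < b) (δ : ℝ) :
    (fun z => max (b * z + δ) 0 * stdNormalPDF z) =
      (Ioi (-δ / b)).indicator fun z => (b * z + δ) * stdNormalPDF z := by
  ext z
  have hmem : z ∈ Ioi (-δ / b) ↔ 0 < b * z + δ := by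
    rw [mem_Ioi, div_lt_iff₀ hb]
    constructor <;> intro <;> linarith
  by_cases hz : 0 < b * z + δ
  · rw [indicator_of_mem (hmem.2 hz), max_eq_left hz.le]
  · rw [indicator_of_notMem (mt hmem.1 hz), max_eq_right (not_lt.1 hz), zero_mul]

lemma integral_max_mul_stdNormalPDF_of_pos {b : ℝ} (hb : 0 < b) (δ : ℝ) :
    ∫ z, max (b * z + δ) 0 * stdNormalPDF z =
      b * stdNormalPDF (δ / b) + δ * stdNormalCDF (δ / b) := by
  rw [max_mul_stdNormalPDF_eq_indicator hb, integral_indicator measurableSet_Ioi]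
  simp_rw [add_mul, mul_assoc]
  rw [integral_add (integrable_mul_stdNormalPDF.const_mul b).integrableOn
      (integrable_stdNormalPDF.const_mul δ).integrableOn,
    integral_const_mul, integral_const_mul, integral_Ioi_mul_stdNormalPDF,
    integral_Ioi_stdNormalPDF, neg_div, neg_neg, stdNormalPDF_neg]

lemma integral_max_mul_stdNormalPDF {β : ℝ} (hβ : β ≠ 0) (δ : ℝ) :
    ∫ z, max (β * z + δ) 0 * stdNormalPDF z =
      |β| * stdNormalPDF (δ / |β|) + δ * stdNormalCDF (δ / |β|) := by
  rcases hβ.lt_or_gt with hneg | hpos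
  · rw [abs_of_neg hneg, ← integral_max_mul_stdNormalPDF_of_pos (neg_pos.2 hneg),
      ← integral_neg_eq_self]
    simp [stdNormalPDF_neg]
  · rw [abs_of_pos hpos, integral_max_mul_stdNormalPDF_of_pos hpos]

lemma integral_max_mul_stdNormalPDF_sub_max {β : ℝ} (hβ : β ≠ 0) (δ : ℝ) :
    (∫ z, max (β * z + δ) 0 * stdNormalPDF z) - max δ 0 =
      |β| * stdNormalPDF (|δ| / |β|) - |δ| * stdNormalCDF (-(|δ| / |β|)) := by
  rw [integral_max_mul_stdNormalPDF hβ]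
  rcases le_total 0 δ with h | h
  · rw [abs_of_nonneg h, max_eq_left h]
    linear_combination δ * stdNormalCDF_add_stdNormalCDF_neg (δ / |β|)
  · rw [abs_of_nonpos h, max_eq_right h, neg_div, neg_neg, stdNormalPDF_neg]
    ring

/-- For `β ≠ 0` and `δ := α − γ`,
`E[max(α + β·Z, γ)] − max(α, γ) = |β|·φ(|δ|/|β|) − |δ|·Φ(−|δ|/|β|)`. -/
theorem expectation_max_affine_sub_max (α β γ : ℝ) (hβ : β ≠ 0) :
    (∫ z : ℝ, max (α + β * z) γ * stdNormalPDF z) - max α γ =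
      |β| * stdNormalPDF (|α - γ| / |β|) -
        |α - γ| * stdNormalCDF (-(|α - γ| / |β|)) := by
  have hsplit (z : ℝ) : max (α + β * z) γ * stdNormalPDF z =
      γ * stdNormalPDF z + max (β * z + (α - γ)) 0 * stdNormalPDF z := by
    rw [← add_mul, ← max_add_add_left]
    ring_nf
  have hmax : max α γ = γ + max (α - γ) 0 := by
    rw [← max_add_add_left]
    ring_nf
  simp_rw [hsplit]
  rw [integral_add (integrable_stdNormalPDF.const_mul γ) (integrable_max_mul_stdNormalPDF β _),
    integral_const_mul, integral_stdNormalPDF, hmax, ← integral_max_mul_stdNormalPDF_sub_max hβ]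
  ring
end

section
/- Let n ≥ 1 and τ > 0. Let K be an n×n real positive semidefinite matrix with all diagonal entries equal to τ². Let Λ be an n×n diagonal matrix whose diagonal entries λᵢ satisfy 0 < λᵢ ≤ λmax for all i. Let c ≥ 0 and let b ∈ ℝⁿ satisfy bᵢ² ≥ c for every i. Then bᵀ(K + Λ)⁻¹b ≥ n·c/(n·τ² + λmax); equivalently, τ² − bᵀ(K + Λ)⁻¹b ≤ τ² − n·c/(n·τ² + λmax). (This is the matrix content of the posterior-variance bound: with K the Gram matrix of a stationary covariance at n design points, Λ the sampling-variance matrix, and bᵢ = k⁰(x, vⁱ), the left side τ² − bᵀ(K+Λ)⁻¹b is the posterior variance at x.) -/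
/-!
Write `M = K + Λ`. For any `x`, positivity of `(x - M⁻¹b)ᵀ M (x - M⁻¹b)` gives
`bᵀM⁻¹b ≥ 2 xᵀb - xᵀMx`. Taking `x = b / D` with `D = nτ² + λmax` and using
`bᵀMb ≤ (tr K + λmax) bᵀb = D bᵀb` (the trace of the positive semidefinite `K` bounds
its top eigenvalue) yields `bᵀM⁻¹b ≥ bᵀb / D ≥ nc / D`.
-/

open Matrix

namespace Matrix

variable {ι : Type*} [Fintype ι]

theorem dotProduct_mul_dotProduct_le (v w : ι → ℝ) :
    (v ⬝ᵥ w) * (v ⬝ᵥ w) ≤ (v ⬝ᵥ v) * (w ⬝ᵥ w) := by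
  simpa only [dotProduct, sq] using Finset.sum_mul_sq_le_sq_mul_sq Finset.univ v w

theorem card_mul_le_dotProduct_self {c : ℝ} {b : ι → ℝ} (hb : ∀ i, c ≤ b i ^ 2) :
    Fintype.card ι * c ≤ b ⬝ᵥ b := by
  simpa [dotProduct, ← sq] using
    Finset.card_nsmul_le_sum Finset.univ (fun i => b i ^ 2) c fun i _ => hb i

theorem dotProduct_diagonal_mulVec_le [DecidableEq ι] {d : ι → ℝ} {a : ℝ}
    (hd : ∀ i, d i ≤ a) (b : ι → ℝ) : b ⬝ᵥ (diagonal d *ᵥ b) ≤ a * (b ⬝ᵥ b) := by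
  simp only [dotProduct, mulVec_diagonal, Finset.mul_sum]
  refine Finset.sum_le_sum fun i _ => ?_
  nlinarith [mul_le_mul_of_nonneg_right (hd i) (mul_self_nonneg (b i))]

theorem PosSemidef.dotProduct_mulVec_le_trace_mul {K : Matrix ι ι ℝ} (hK : K.PosSemidef)
    (b : ι → ℝ) : b ⬝ᵥ (K *ᵥ b) ≤ K.trace * (b ⬝ᵥ b) := by
  obtain ⟨m, v, rfl⟩ := posSemidef_iff_eq_sum_vecMulVec.mp hK
  simp only [star_trivial, sum_mulVec, dotProduct_sum, trace_sum, trace_vecMulVec,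
    Finset.sum_mul]
  refine Finset.sum_le_sum fun k _ => ?_
  rw [dotProduct_mulVec, vecMul_vecMulVec, smul_dotProduct, smul_eq_mul, dotProduct_comm b]
  exact dotProduct_mul_dotProduct_le _ _

variable [DecidableEq ι] {M : Matrix ι ι ℝ}

theorem PosDef.two_mul_dotProduct_sub_le_dotProduct_inv_mulVec (hM : M.PosDef) (x b : ι → ℝ) :
    2 * (x ⬝ᵥ b) - x ⬝ᵥ (M *ᵥ x) ≤ b ⬝ᵥ (M⁻¹ *ᵥ b) := by
  set y := M⁻¹ *ᵥ b
  have hy : M *ᵥ y = b := by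
    rw [mulVec_mulVec, mul_nonsing_inv _ ((isUnit_iff_isUnit_det M).mp hM.isUnit), one_mulVec]
  have hsymm : y ⬝ᵥ (M *ᵥ x) = x ⬝ᵥ b := by
    rw [dotProduct_mulVec, ← mulVec_transpose, ← conjTranspose_eq_transpose_of_trivial,
      hM.isHermitian.eq, hy, dotProduct_comm]
  have h := hM.posSemidef.dotProduct_mulVec_nonneg (x - y)
  simp only [star_trivial, mulVec_sub, hy, dotProduct_sub, sub_dotProduct] at h
  linarith [dotProduct_comm y b]

theorem PosDef.div_le_dotProduct_inv_mulVec (hM : M.PosDef) {b : ι → ℝ} {D : ℝ} (hD : 0 < D)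
    (hMb : b ⬝ᵥ (M *ᵥ b) ≤ D * (b ⬝ᵥ b)) : b ⬝ᵥ b / D ≤ b ⬝ᵥ (M⁻¹ *ᵥ b) := by
  have h := hM.two_mul_dotProduct_sub_le_dotProduct_inv_mulVec (D⁻¹ • b) b
  rw [mulVec_smul, dotProduct_smul, smul_dotProduct, smul_dotProduct, smul_eq_mul,
    smul_eq_mul, smul_eq_mul] at h
  calc b ⬝ᵥ b / D = 2 * (D⁻¹ * (b ⬝ᵥ b)) - D⁻¹ * (D⁻¹ * (D * (b ⬝ᵥ b))) := by
        field_simp; ring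
    _ ≤ 2 * (D⁻¹ * (b ⬝ᵥ b)) - D⁻¹ * (D⁻¹ * (b ⬝ᵥ (M *ᵥ b))) := by gcongr
    _ ≤ b ⬝ᵥ (M⁻¹ *ᵥ b) := h

end Matrix

theorem posterior_variance_bound_general (n : ℕ) (τ : ℝ)
    (K : Matrix (Fin n) (Fin n) ℝ) (hK : K.PosSemidef)
    (hKdiag : ∀ i, K i i = τ ^ 2)
    (lam : Fin n → ℝ) (lammax : ℝ) (hlam : ∀ i, 0 < lam i ∧ lam i ≤ lammax)
    (c : ℝ) (b : Fin n → ℝ) (hb : ∀ i, c ≤ b i ^ 2) :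
    (n : ℝ) * c / ((n : ℝ) * τ ^ 2 + lammax) ≤
        b ⬝ᵥ ((K + Matrix.diagonal lam)⁻¹ *ᵥ b) ∧
      τ ^ 2 - b ⬝ᵥ ((K + Matrix.diagonal lam)⁻¹ *ᵥ b) ≤
        τ ^ 2 - (n : ℝ) * c / ((n : ℝ) * τ ^ 2 + lammax) := by
  suffices h : (n : ℝ) * c / (n * τ ^ 2 + lammax) ≤ b ⬝ᵥ ((K + diagonal lam)⁻¹ *ᵥ b) from
    ⟨h, by linarith⟩
  rcases n.eq_zero_or_pos with rfl | hn
  · simp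
  have hD : 0 < (n : ℝ) * τ ^ 2 + lammax := by
    have := (hlam ⟨0, hn⟩).1.trans_le (hlam ⟨0, hn⟩).2
    positivity
  have hM : (K + diagonal lam).PosDef :=
    PosDef.posSemidef_add hK (posDef_diagonal_iff.mpr fun i => (hlam i).1)
  have htrace : K.trace = n * τ ^ 2 := by simp [trace, hKdiag]
  have hquad : b ⬝ᵥ ((K + diagonal lam) *ᵥ b) ≤ (n * τ ^ 2 + lammax) * (b ⬝ᵥ b) := by
    rw [add_mulVec, dotProduct_add, add_mul, ← htrace]
    exact add_le_add (hK.dotProduct_mulVec_le_trace_mul b)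
      (dotProduct_diagonal_mulVec_le (fun i => (hlam i).2) b)
  calc (n : ℝ) * c / (n * τ ^ 2 + lammax) ≤ b ⬝ᵥ b / (n * τ ^ 2 + lammax) := by
        gcongr
        simpa using card_mul_le_dotProduct_self hb
    _ ≤ _ := hM.div_le_dotProduct_inv_mulVec hD hquad

/-- Posterior-variance bound: if `K` is PSD with all diagonal entries `τ²`,
`Λ = diag(λᵢ)` with `0 < λᵢ ≤ λmax`, `c ≥ 0` and `bᵢ² ≥ c` for all `i`, then
`bᵀ(K + Λ)⁻¹b ≥ n·c/(n·τ² + λmax)`; equivalently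
`τ² − bᵀ(K + Λ)⁻¹b ≤ τ² − n·c/(n·τ² + λmax)`. -/
theorem posterior_variance_bound (n : ℕ) (hn : 1 ≤ n) (τ : ℝ) (hτ : 0 < τ)
    (K : Matrix (Fin n) (Fin n) ℝ) (hK : K.PosSemidef)
    (hKdiag : ∀ i, K i i = τ ^ 2)
    (lam : Fin n → ℝ) (lammax : ℝ) (hlam : ∀ i, 0 < lam i ∧ lam i ≤ lammax)
    (c : ℝ) (hc : 0 ≤ c) (b : Fin n → ℝ) (hb : ∀ i, c ≤ b i ^ 2) :
    (n : ℝ) * c / ((n : ℝ) * τ ^ 2 + lammax) ≤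
        b ⬝ᵥ ((K + Matrix.diagonal lam)⁻¹ *ᵥ b) ∧
      τ ^ 2 - b ⬝ᵥ ((K + Matrix.diagonal lam)⁻¹ *ᵥ b) ≤
        τ ^ 2 - (n : ℝ) * c / ((n : ℝ) * τ ^ 2 + lammax) :=
  posterior_variance_bound_general n τ K hK hKdiag lam lammax hlam c b hb
end

section
/- In the Gaussian-process posterior setup below, the sequence n ↦ ⟨ξ, uⁿ⟩ is nonincreasing in n and every term is nonnegative: for all n, 0 ≤ ⟨ξ, uⁿ⁺¹⟩ ≤ ⟨ξ, uⁿ⟩ ≤ ‖ξ‖². (In the paper's notation, ⟨ξ, uⁿ⟩ = kⁿ(x,x) is the posterior variance of the Gaussian process at x after n samples, which is nonnegative and nonincreasing in the number of samples.) -/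
/-!
`⟪ξ, uⁿ⟫` is the minimum value of the ridge-regression objective
`Fₙ(w) = ‖ξ - ∑_{i<n} wᵢ • φ i‖² + ∑_{i<n} λᵢ wᵢ²`, attained at `wⁿ`: the equation `Gₙ wⁿ = kₙ`
says that the residual `uⁿ` satisfies `⟪φ i, uⁿ⟫ = λᵢ wⁿᵢ`, which makes `Fₙ` the sum of `Fₙ(wⁿ)`
and a nonnegative quadratic form in `w - wⁿ`, and also gives `⟪ξ, uⁿ⟫ = Fₙ(wⁿ)`. Hence
`⟪ξ, uⁿ⟫ ≥ 0`, and comparing with `w = 0` gives `⟪ξ, uⁿ⟫ ≤ ‖ξ‖²`. Padding `wⁿ` by a zero weight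
does not change the objective, so `Fₙ₊₁(wⁿ⁺¹) ≤ Fₙ₊₁(wⁿ, 0) = Fₙ(wⁿ)`.
-/

open Matrix
open scoped RealInnerProductSpace

variable {H : Type*} [NormedAddCommGroup H] [InnerProductSpace ℝ H]

/-- The Gram matrix `Gₙ` with entries `⟪φ i, φ j⟫ + λ i · δᵢⱼ`. -/
noncomputable def gramMat (φ : ℕ → H) (lam : ℕ → ℝ) (n : ℕ) :
    Matrix (Fin n) (Fin n) ℝ :=
  Matrix.of fun i j : Fin n => ⟪φ i, φ j⟫ + if i = j then lam i else 0

/-- The posterior vector `uⁿ := ξ − Σ_{i<n} wⁿᵢ · φ i` where `wⁿ := Gₙ⁻¹ kₙ`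
and `kₙ = (⟪φ i, ξ⟫)_{i<n}`; in particular `u⁰ = ξ`. -/
noncomputable def postVec (ξ : H) (φ : ℕ → H) (lam : ℕ → ℝ) (n : ℕ) : H :=
  ξ - ∑ i : Fin n,
    (((gramMat φ lam n)⁻¹ *ᵥ fun i : Fin n => ⟪φ i, ξ⟫) i) • φ i

namespace RidgeRegression

variable {ι : Type*} [Fintype ι] (ξ : H) (v : ι → H) (lam : ι → ℝ)

noncomputable def objective (w : ι → ℝ) : ℝ :=
  ‖ξ - ∑ i, w i • v i‖ ^ 2 + ∑ i, lam i * w i ^ 2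

theorem objective_nonneg (hlam : ∀ i, 0 ≤ lam i) (w : ι → ℝ) : 0 ≤ objective ξ v lam w :=
  add_nonneg (sq_nonneg _) (Finset.sum_nonneg fun i _ => mul_nonneg (hlam i) (sq_nonneg _))

@[simp]
theorem objective_zero : objective ξ v lam 0 = ‖ξ‖ ^ 2 := by
  simp [objective]

variable [DecidableEq ι]

theorem gram_add_diagonal_mulVec_apply (w : ι → ℝ) (i : ι) :
    ((gram ℝ v + diagonal lam) *ᵥ w) i = ⟪v i, ∑ j, w j • v j⟫ + lam i * w i := by
  rw [add_mulVec, Pi.add_apply, mulVec_diagonal]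
  simp [mulVec, dotProduct, gram_apply, inner_sum, real_inner_smul_right, mul_comm]

theorem posDef_gram_add_diagonal (hlam : ∀ i, 0 < lam i) : (gram ℝ v + diagonal lam).PosDef :=
  PosDef.posSemidef_add (posSemidef_gram ℝ v) (PosDef.diagonal hlam)

variable {ξ v lam} {w : ι → ℝ}

theorem inner_sub_sum_smul_of_mulVec_eq
    (hw : (gram ℝ v + diagonal lam) *ᵥ w = fun i => ⟪v i, ξ⟫) (i : ι) :
    ⟪v i, ξ - ∑ j, w j • v j⟫ = lam i * w i := by
  have hi := congrFun hw i
  rw [gram_add_diagonal_mulVec_apply] at hi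
  rw [inner_sub_right]
  linarith

theorem objective_eq_add_of_mulVec_eq
    (hw : (gram ℝ v + diagonal lam) *ᵥ w = fun i => ⟪v i, ξ⟫) (w' : ι → ℝ) :
    objective ξ v lam w' = objective ξ v lam w
      + ‖∑ i, (w' i - w i) • v i‖ ^ 2 + ∑ i, lam i * (w' i - w i) ^ 2 := by
  set r := ξ - ∑ i, w i • v i
  have hres : ξ - ∑ i, w' i • v i = r - ∑ i, (w' i - w i) • v i := by
    simp only [r, sub_smul, Finset.sum_sub_distrib]; abel
  have hcross : ⟪r, ∑ i, (w' i - w i) • v i⟫ = ∑ i, (w' i - w i) * (lam i * w i) := by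
    simp only [inner_sum, real_inner_smul_right]
    exact Finset.sum_congr rfl fun i _ => by
      rw [real_inner_comm, inner_sub_sum_smul_of_mulVec_eq hw]
  have hpenalty : ∑ i, lam i * w' i ^ 2 = ∑ i, lam i * w i ^ 2
      + 2 * ∑ i, (w' i - w i) * (lam i * w i) + ∑ i, lam i * (w' i - w i) ^ 2 := by
    rw [Finset.mul_sum, ← Finset.sum_add_distrib, ← Finset.sum_add_distrib]
    exact Finset.sum_congr rfl fun i _ => by ring
  unfold objective
  rw [hres, norm_sub_sq_real, hcross, hpenalty]
  ring

theorem objective_le_of_mulVec_eq (hlam : ∀ i, 0 ≤ lam i)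
    (hw : (gram ℝ v + diagonal lam) *ᵥ w = fun i => ⟪v i, ξ⟫) (w' : ι → ℝ) :
    objective ξ v lam w ≤ objective ξ v lam w' := by
  rw [objective_eq_add_of_mulVec_eq hw w']
  have hpenalty : 0 ≤ ∑ i, lam i * (w' i - w i) ^ 2 :=
    Finset.sum_nonneg fun i _ => mul_nonneg (hlam i) (sq_nonneg _)
  linarith [sq_nonneg ‖∑ i, (w' i - w i) • v i‖]

theorem inner_sub_sum_smul_eq_objective_of_mulVec_eq
    (hw : (gram ℝ v + diagonal lam) *ᵥ w = fun i => ⟪v i, ξ⟫) :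
    ⟪ξ, ξ - ∑ i, w i • v i⟫ = objective ξ v lam w := by
  set r := ξ - ∑ i, w i • v i
  have hfit : ⟪∑ i, w i • v i, r⟫ = ∑ i, lam i * w i ^ 2 := by
    simp only [sum_inner, real_inner_smul_left]
    exact Finset.sum_congr rfl fun i _ => by
      rw [inner_sub_sum_smul_of_mulVec_eq hw]; ring
  calc ⟪ξ, r⟫ = ⟪r + ∑ i, w i • v i, r⟫ := by rw [sub_add_cancel]
    _ = objective ξ v lam w := by
      rw [inner_add_left, real_inner_self_eq_norm_sq, hfit, objective]

theorem objective_snoc_zero {n : ℕ} (v : Fin (n + 1) → H) (lam : Fin (n + 1) → ℝ)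
    (w : Fin n → ℝ) :
    objective ξ v lam (Fin.snoc w 0) = objective ξ (Fin.init v) (Fin.init lam) w := by
  simp [objective, Fin.sum_univ_castSucc, Fin.init]

end RidgeRegression

open RidgeRegression

theorem gramMat_eq (φ : ℕ → H) (lam : ℕ → ℝ) (n : ℕ) :
    gramMat φ lam n = gram ℝ (fun i : Fin n => φ i) + diagonal fun i : Fin n => lam i := by
  ext i j
  simp [gramMat, gram_apply, diagonal_apply]

noncomputable def postWeights (ξ : H) (φ : ℕ → H) (lam : ℕ → ℝ) (n : ℕ) : Fin n → ℝ :=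
  (gramMat φ lam n)⁻¹ *ᵥ fun i : Fin n => ⟪φ i, ξ⟫

variable (ξ : H) (φ : ℕ → H) {lam : ℕ → ℝ}

theorem gram_add_diagonal_mulVec_postWeights (hlam : ∀ ℓ, 0 < lam ℓ) (n : ℕ) :
    (gram ℝ (fun i : Fin n => φ i) + diagonal fun i : Fin n => lam i) *ᵥ postWeights ξ φ lam n
      = fun i : Fin n => ⟪φ i, ξ⟫ := by
  have hG : (gramMat φ lam n).PosDef :=
    gramMat_eq φ lam n ▸ posDef_gram_add_diagonal _ _ fun _ => hlam _
  rw [← gramMat_eq, postWeights, mulVec_mulVec, mul_nonsing_inv _ hG.det_pos.ne'.isUnit,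
    one_mulVec]

theorem inner_postVec_eq_objective (hlam : ∀ ℓ, 0 < lam ℓ) (n : ℕ) :
    ⟪ξ, postVec ξ φ lam n⟫
      = objective ξ (fun i : Fin n => φ i) (fun i => lam i) (postWeights ξ φ lam n) :=
  inner_sub_sum_smul_eq_objective_of_mulVec_eq (gram_add_diagonal_mulVec_postWeights ξ φ hlam n)

theorem inner_postVec_le_objective (hlam : ∀ ℓ, 0 < lam ℓ) (n : ℕ) (w : Fin n → ℝ) :
    ⟪ξ, postVec ξ φ lam n⟫ ≤ objective ξ (fun i : Fin n => φ i) (fun i => lam i) w := by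
  rw [inner_postVec_eq_objective ξ φ hlam]
  exact objective_le_of_mulVec_eq (fun _ => (hlam _).le)
    (gram_add_diagonal_mulVec_postWeights ξ φ hlam n) w

/-- The sequence `n ↦ ⟪ξ, uⁿ⟫` (the posterior variance) is nonnegative,
nonincreasing in `n`, and bounded above by `‖ξ‖²`. -/
theorem postVariance_antitone_nonneg (ξ : H) (φ : ℕ → H) (lam : ℕ → ℝ)
    (hlam : ∀ ℓ, 0 < lam ℓ) (n : ℕ) :
    0 ≤ ⟪ξ, postVec ξ φ lam (n + 1)⟫ ∧
      ⟪ξ, postVec ξ φ lam (n + 1)⟫ ≤ ⟪ξ, postVec ξ φ lam n⟫ ∧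
      ⟪ξ, postVec ξ φ lam n⟫ ≤ ‖ξ‖ ^ 2 := by
  refine ⟨?_, ?_, ?_⟩
  · rw [inner_postVec_eq_objective ξ φ hlam]
    exact objective_nonneg _ _ _ (fun _ => (hlam _).le) _
  · calc ⟪ξ, postVec ξ φ lam (n + 1)⟫
        ≤ objective ξ (fun i : Fin (n + 1) => φ i) (fun i => lam i)
            (Fin.snoc (postWeights ξ φ lam n) 0) :=
          inner_postVec_le_objective ξ φ hlam _ _
      _ = objective ξ (fun i : Fin n => φ i) (fun i => lam i) (postWeights ξ φ lam n) :=
          objective_snoc_zero _ _ _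
      _ = ⟪ξ, postVec ξ φ lam n⟫ := (inner_postVec_eq_objective ξ φ hlam n).symm
  · simpa using inner_postVec_le_objective ξ φ hlam n 0
end
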